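/- Let α > 0 and p > 1 with p ≠ Q, where Q = m + (α+1)k. Then the function u(z,σ) = ρ(z,σ)^{−(Q−p)/(p−1)} satisfies 𝓛_{α,p}(u) = 0 at every point of ℝ^N ∖ {(0,0)}. -/

import Mathlib

open Real MeasureTheory
open scoped RealInnerProductSpace

noncomputable section

abbrev Euc (n : ℕ) := EuclideanSpace ℝ (Fin n)

/-- A Minkowski norm on `ℝⁿ`: nonnegative, absolutely homogeneous, with `N²` of class `C²`
away from the origin and strictly convex. -/
def IsMinkowskiNorm {n : ℕ} (N : Euc n → ℝ) : Prop :=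
  (∀ x, 0 ≤ N x) ∧ (∀ (l : ℝ) (x : Euc n), N (l • x) = |l| * N x) ∧
  ContDiffOn ℝ 2 (fun x => (N x) ^ 2) {(0 : Euc n)}ᶜ ∧
  StrictConvexOn ℝ Set.univ (fun x => (N x) ^ 2)

/-- The Legendre transform (dual norm) `N⁰(x) = sup { ⟨x,ξ⟩ : N(ξ) = 1 }`. -/
def dualNorm {n : ℕ} (N : Euc n → ℝ) (x : Euc n) : ℝ :=
  sSup ((fun ξ => ⟪x, ξ⟫) '' {ξ | N ξ = 1})

variable {m k : ℕ}

/-- The dual anisotropic Minkowski gauge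
`ρ(z,σ) = (Φ⁰(z)^{2(α+1)} + 4(α+1)²Ψ⁰(σ)²)^{1/(2(α+1))}`. -/
def rho (α : ℝ) (Φ : Euc m → ℝ) (Ψ : Euc k → ℝ) (x : Euc m × Euc k) : ℝ :=
  (dualNorm Φ x.1 ^ (2 * (α + 1)) + 4 * (α + 1) ^ 2 * dualNorm Ψ x.2 ^ 2) ^ (1 / (2 * (α + 1)))

/-- Gradient in the `z` variables. -/
def gradZ (u : Euc m × Euc k → ℝ) (x : Euc m × Euc k) : Euc m :=
  gradient (fun z => u (z, x.2)) x.1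

/-- Gradient in the `σ` variables. -/
def gradS (u : Euc m × Euc k → ℝ) (x : Euc m × Euc k) : Euc k :=
  gradient (fun σ => u (x.1, σ)) x.2

/-- Divergence in the `z` variables. -/
def divZ (V : Euc m × Euc k → Euc m) (x : Euc m × Euc k) : ℝ :=
  ∑ i, fderiv ℝ (fun z => V (z, x.2) i) x.1 (EuclideanSpace.single i 1)

/-- Divergence in the `σ` variables. -/
def divS (V : Euc m × Euc k → Euc k) (x : Euc m × Euc k) : ℝ :=
  ∑ i, fderiv ℝ (fun σ => V (x.1, σ) i) x.2 (EuclideanSpace.single i 1)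

/-- The Finsler Laplacian in the `z` variables, `Δ_Φ(u) = div_z(Φ(∇_z u) ∇Φ(∇_z u))`. -/
def finslerLapZ (Φ : Euc m → ℝ) (u : Euc m × Euc k → ℝ) (x : Euc m × Euc k) : ℝ :=
  divZ (fun y => Φ (gradZ u y) • gradient Φ (gradZ u y)) x

/-- The Finsler Laplacian in the `σ` variables, `Δ_Ψ(u) = div_σ(Ψ(∇_σ u) ∇Ψ(∇_σ u))`. -/
def finslerLapS (Ψ : Euc k → ℝ) (u : Euc m × Euc k → ℝ) (x : Euc m × Euc k) : ℝ :=
  divS (fun y => Ψ (gradS u y) • gradient Ψ (gradS u y)) x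

/-- The operator `𝓛_{α,p}`. -/
def Lop (α p : ℝ) (Φ : Euc m → ℝ) (Ψ : Euc k → ℝ) (u : Euc m × Euc k → ℝ)
    (x : Euc m × Euc k) : ℝ :=
  divZ (fun y =>
      (Φ (gradZ u y) ^ 2 + dualNorm Φ y.1 ^ (2 * α) / 4 * Ψ (gradS u y) ^ 2) ^ ((p - 2) / 2) •
        (Φ (gradZ u y) • gradient Φ (gradZ u y))) x
  + divS (fun y =>
      (Φ (gradZ u y) ^ 2 + dualNorm Φ y.1 ^ (2 * α) / 4 * Ψ (gradS u y) ^ 2) ^ ((p - 2) / 2) •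
        ((dualNorm Φ y.1 ^ (2 * α) / 4 * Ψ (gradS u y)) • gradient Ψ (gradS u y))) x

/-- The operator `𝓛_{α,2}(u) = Δ_Φ(u) + (Φ⁰(z)^{2α}/4) Δ_Ψ(u)`. -/
def Lop2 (α : ℝ) (Φ : Euc m → ℝ) (Ψ : Euc k → ℝ) (u : Euc m × Euc k → ℝ)
    (x : Euc m × Euc k) : ℝ :=
  finslerLapZ Φ u x + dualNorm Φ x.1 ^ (2 * α) / 4 * finslerLapS Ψ u x

/-!
For `z ≠ 0` the supremum defining `Φ⁰(z)` is attained at a unique point `ξ` of `{Φ = 1}`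
(strict convexity), `∇Φ⁰(z) = ξ` (the maximizer depends continuously on `z`), and the
first-order condition at `ξ` shows that `v ↦ Φ(v) ∇Φ(v)` inverts the duality map
`J = Φ⁰ ∇Φ⁰`. Writing `T = ρ^{2(α+1)}` and `u = ρ^e = T^{e/(2(α+1))}`, both partial gradients
of `u` are multiples of `J`, and the two components of the flux in `𝓛_{α,p}(u)` become
`W z` and `(α+1) W σ` with `W = e|e|^{p-2} Φ⁰(z)^{αp} T^δ`, `δ = (p-1)e/(2(α+1)) - p/2`.
Since `T` is homogeneous of degree `2(α+1)` under `(z, σ) ↦ (λz, λ^{α+1}σ)`, Euler's identity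
gives `div(W z, (α+1) W σ) = (Q + αp + 2(α+1)δ) W`, and the exponent vanishes precisely for
`e = -(Q-p)/(p-1)`. On `{z = 0}`, where `Φ⁰` is not differentiable, `W` vanishes to
order `αp > 0`.
-/

section GradientCalculus

variable {F : Type*} [NormedAddCommGroup F] [InnerProductSpace ℝ F] [CompleteSpace F]
  {f g : F → ℝ} {f' g' x : F}

theorem HasDerivAt.comp_hasGradientAt {h : ℝ → ℝ} {h' : ℝ} (hh : HasDerivAt h h' (f x))
    (hf : HasGradientAt f f' x) : HasGradientAt (fun y => h (f y)) (h' • f') x := by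
  rw [hasGradientAt_iff_hasFDerivAt, map_smul]
  exact hh.comp_hasFDerivAt x hf.hasFDerivAt

theorem HasGradientAt.add_const (hf : HasGradientAt f f' x) (c : ℝ) :
    HasGradientAt (fun y => f y + c) f' x :=
  hasGradientAt_iff_hasFDerivAt.2 (hf.hasFDerivAt.add_const c)

theorem HasGradientAt.const_add (hf : HasGradientAt f f' x) (c : ℝ) :
    HasGradientAt (fun y => c + f y) f' x :=
  hasGradientAt_iff_hasFDerivAt.2 (hf.hasFDerivAt.const_add c)

theorem HasGradientAt.const_mul (hf : HasGradientAt f f' x) (c : ℝ) :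
    HasGradientAt (fun y => c * f y) (c • f') x := by
  rw [hasGradientAt_iff_hasFDerivAt, map_smul]
  exact hf.hasFDerivAt.const_mul c

theorem HasGradientAt.mul (hf : HasGradientAt f f' x) (hg : HasGradientAt g g' x) :
    HasGradientAt (fun y => f y * g y) (f x • g' + g x • f') x := by
  rw [hasGradientAt_iff_hasFDerivAt, map_add, map_smul, map_smul]
  exact hf.hasFDerivAt.mul hg.hasFDerivAt

theorem hasGradientAt_zero_of_abs_le_mul_rpow {C r : ℝ} (hr : 1 < r)
    (hf : ∀ y, |f y| ≤ C * ‖y‖ ^ r) : HasGradientAt f 0 0 := by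
  have hf0 : f 0 = 0 := by
    simpa [Real.zero_rpow (by linarith : r ≠ 0)] using hf 0
  have hlim : Filter.Tendsto (fun y : F => C * ‖y‖ ^ (r - 1)) (nhds 0) (nhds 0) := by
    have := ((continuous_norm.rpow_const fun _ => Or.inr (by linarith : 0 ≤ r - 1)).const_mul
      C).tendsto (0 : F)
    simpa [Real.zero_rpow (by linarith : r - 1 ≠ 0)] using this
  refine hasGradientAt_iff_isLittleO.2 <| Asymptotics.isLittleO_iff.2 fun c hc => ?_
  filter_upwards [hlim.eventually_le_const hc] with y hy
  have hsplit : ‖y‖ ^ r = ‖y‖ ^ (r - 1) * ‖y‖ := by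
    conv_lhs => rw [← sub_add_cancel r 1]
    rw [Real.rpow_add' (norm_nonneg y) (by linarith), Real.rpow_one]
  simp only [hf0, sub_zero, inner_zero_left, Real.norm_eq_abs]
  calc |f y| ≤ C * ‖y‖ ^ (r - 1) * ‖y‖ := by rw [mul_assoc, ← hsplit]; exact hf y
    _ ≤ c * ‖y‖ := mul_le_mul_of_nonneg_right hy (norm_nonneg y)

end GradientCalculus

def euclideanDiv {n : ℕ} (V : Euc n → Euc n) (x : Euc n) : ℝ :=
  ∑ i, fderiv ℝ (fun v => V v i) x (EuclideanSpace.single i 1)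

section Divergence

variable {n : ℕ} {V W : Euc n → Euc n} {x : Euc n}

theorem euclideanDiv_congr (h : V =ᶠ[nhds x] W) : euclideanDiv V x = euclideanDiv W x :=
  Finset.sum_congr rfl fun i _ => by
    rw [Filter.EventuallyEq.fderiv_eq (h.mono fun v (hv : V v = W v) => by rw [hv])]

theorem HasFDerivAt.euclideanDiv_eq {L : Euc n →L[ℝ] Euc n} (h : HasFDerivAt V L x) :
    euclideanDiv V x = ∑ i, L (EuclideanSpace.single i 1) i :=
  Finset.sum_congr rfl fun i _ => by
    have hi : HasFDerivAt (fun v => V v i) ((EuclideanSpace.proj i).comp L) x :=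
      ((EuclideanSpace.proj i : Euc n →L[ℝ] ℝ).hasFDerivAt.comp x h :)
    rw [hi.fderiv]
    rfl

theorem euclideanDiv_smul_self {f : Euc n → ℝ} {g : Euc n} (hf : HasGradientAt f g x) :
    euclideanDiv (fun v => f v • v) x = n * f x + ⟪g, x⟫ := by
  have h : HasFDerivAt (fun v => f v • v) _ x := hf.hasFDerivAt.smul (hasFDerivAt_id x)
  rw [h.euclideanDiv_eq]
  simp [Finset.sum_add_distrib, PiLp.inner_apply, mul_comm]

theorem euclideanDiv_smul_self_of_tendsto {f : Euc n → ℝ}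
    (hf : Filter.Tendsto f (nhds 0) (nhds 0)) : euclideanDiv (fun v => f v • v) 0 = 0 := by
  have h : HasFDerivAt (fun v => f v • v) (0 : Euc n →L[ℝ] Euc n) 0 := by
    refine hasFDerivAt_iff_isLittleO_nhds_zero.2 ?_
    simpa using (Asymptotics.isLittleO_one_iff ℝ).2 hf |>.smul_isBigO
      (Asymptotics.isBigO_refl (fun v : Euc n => v) _)
  simp [h.euclideanDiv_eq]

end Divergence

namespace IsMinkowskiNorm

variable {n : ℕ} {N : Euc n → ℝ}

theorem nonneg (hN : IsMinkowskiNorm N) (x : Euc n) : 0 ≤ N x := hN.1 x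

theorem map_smul (hN : IsMinkowskiNorm N) (l : ℝ) (x : Euc n) : N (l • x) = |l| * N x :=
  hN.2.1 l x

theorem contDiffOn_sq (hN : IsMinkowskiNorm N) :
    ContDiffOn ℝ 2 (fun x => N x ^ 2) {(0 : Euc n)}ᶜ :=
  hN.2.2.1

theorem strictConvexOn_sq (hN : IsMinkowskiNorm N) :
    StrictConvexOn ℝ Set.univ (fun x => N x ^ 2) :=
  hN.2.2.2

theorem map_zero (hN : IsMinkowskiNorm N) : N 0 = 0 := by
  simpa using hN.map_smul 0 0

theorem pos (hN : IsMinkowskiNorm N) {x : Euc n} (hx : x ≠ 0) : 0 < N x := by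
  refine (hN.nonneg x).lt_of_ne' fun h0 => ?_
  -- `x/2` would lie strictly below the chord of `N²` from `0` to `x`, which vanishes
  have := hN.strictConvexOn_sq.2 (Set.mem_univ x) (Set.mem_univ 0) hx one_half_pos one_half_pos
    (add_halves 1)
  simp [hN.map_smul, h0, hN.map_zero] at this

theorem contDiffAt (hN : IsMinkowskiNorm N) {x : Euc n} (hx : x ≠ 0) : ContDiffAt ℝ 2 N x := by
  have hsq : ContDiffAt ℝ 2 (fun y => N y ^ 2) x :=
    hN.contDiffOn_sq.contDiffAt (isOpen_compl_singleton.mem_nhds hx)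
  simpa only [Real.sqrt_sq (hN.nonneg _)] using hsq.sqrt (pow_pos (hN.pos hx) 2).ne'

theorem differentiableAt (hN : IsMinkowskiNorm N) {x : Euc n} (hx : x ≠ 0) :
    DifferentiableAt ℝ N x :=
  (hN.contDiffAt hx).differentiableAt (by norm_num)

theorem exists_bounds (hN : IsMinkowskiNorm N) (hn : 1 ≤ n) :
    ∃ c C : ℝ, 0 < c ∧ ∀ x, c * ‖x‖ ≤ N x ∧ N x ≤ C * ‖x‖ := by
  have hne : (Metric.sphere (0 : Euc n) 1).Nonempty :=
    ⟨EuclideanSpace.single ⟨0, hn⟩ 1, by simp⟩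
  have hne0 : ∀ {y : Euc n}, y ∈ Metric.sphere 0 1 → y ≠ 0 := by
    rintro y hy rfl
    simp at hy
  have hcont : ContinuousOn N (Metric.sphere (0 : Euc n) 1) := fun y hy =>
    (hN.differentiableAt (hne0 hy)).continuousAt.continuousWithinAt
  obtain ⟨a, ha, hmin⟩ := (isCompact_sphere 0 1).exists_isMinOn hne hcont
  obtain ⟨b, -, hmax⟩ := (isCompact_sphere 0 1).exists_isMaxOn hne hcont
  refine ⟨N a, N b, hN.pos (hne0 ha), fun x => ?_⟩
  rcases eq_or_ne x 0 with rfl | hx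
  · simp [hN.map_zero]
  have hu : ‖x‖⁻¹ • x ∈ Metric.sphere (0 : Euc n) 1 := by
    simp [norm_smul, hx]
  have hNx : N x = ‖x‖ * N (‖x‖⁻¹ • x) := by
    rw [hN.map_smul, abs_inv, abs_norm, mul_inv_cancel_left₀ (norm_ne_zero_iff.2 hx)]
  rw [hNx, mul_comm (N a), mul_comm (N b)]
  exact ⟨mul_le_mul_of_nonneg_left (hmin hu) (norm_nonneg x),
    mul_le_mul_of_nonneg_left (hmax hu) (norm_nonneg x)⟩

theorem continuous (hN : IsMinkowskiNorm N) (hn : 1 ≤ n) : Continuous N := by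
  obtain ⟨c, C, -, hb⟩ := hN.exists_bounds hn
  refine continuous_iff_continuousAt.2 fun x => ?_
  rcases eq_or_ne x 0 with rfl | hx
  · have hC : Filter.Tendsto (fun y : Euc n => C * ‖y‖) (nhds 0) (nhds 0) := by
      simpa using (continuous_norm.tendsto (0 : Euc n)).const_mul C
    rw [ContinuousAt, hN.map_zero]
    exact squeeze_zero hN.nonneg (fun y => (hb y).2) hC
  · exact (hN.differentiableAt hx).continuousAt

theorem isCompact_unitSphere (hN : IsMinkowskiNorm N) (hn : 1 ≤ n) :
    IsCompact {ξ : Euc n | N ξ = 1} := by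
  obtain ⟨c, C, hc, hb⟩ := hN.exists_bounds hn
  refine Metric.isCompact_of_isClosed_isBounded
    (isClosed_eq (hN.continuous hn) continuous_const)
    ((Metric.isBounded_closedBall (x := 0) (r := c⁻¹)).subset fun ξ hξ => ?_)
  have := (hb ξ).1
  rw [show N ξ = 1 from hξ] at this
  rw [mem_closedBall_zero_iff, ← one_div, le_div_iff₀ hc]
  linarith

theorem unitSphere_nonempty (hN : IsMinkowskiNorm N) (hn : 1 ≤ n) :
    {ξ : Euc n | N ξ = 1}.Nonempty := by
  set e : Euc n := EuclideanSpace.single ⟨0, hn⟩ 1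
  have he : e ≠ 0 := by simp [e]
  refine ⟨(N e)⁻¹ • e, ?_⟩
  rw [Set.mem_ofPred_eq, hN.map_smul, abs_of_pos (inv_pos.2 (hN.pos he)),
    inv_mul_cancel₀ (hN.pos he).ne']

end IsMinkowskiNorm

def dualMaximizer {n : ℕ} (N : Euc n → ℝ) (z : Euc n) : Euc n :=
  Classical.epsilon fun ξ => N ξ = 1 ∧ ∀ η, N η = 1 → ⟪z, η⟫ ≤ ⟪z, ξ⟫

namespace IsMinkowskiNorm

variable {n : ℕ} {N : Euc n → ℝ}

theorem dualMaximizer_spec (hN : IsMinkowskiNorm N) (hn : 1 ≤ n) (z : Euc n) :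
    N (dualMaximizer N z) = 1 ∧ ∀ η, N η = 1 → ⟪z, η⟫ ≤ ⟪z, dualMaximizer N z⟫ := by
  obtain ⟨ξ, hξ, hmax⟩ := (hN.isCompact_unitSphere hn).exists_isMaxOn
    (hN.unitSphere_nonempty hn) (continuous_const.inner continuous_id (𝕜 := ℝ)).continuousOn
  exact Classical.epsilon_spec (p := fun ξ => N ξ = 1 ∧ ∀ η, N η = 1 → ⟪z, η⟫ ≤ ⟪z, ξ⟫)
    ⟨ξ, hξ, fun η hη => hmax hη⟩

theorem map_dualMaximizer (hN : IsMinkowskiNorm N) (hn : 1 ≤ n) (z : Euc n) :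
    N (dualMaximizer N z) = 1 :=
  (hN.dualMaximizer_spec hn z).1

theorem dualNorm_eq_inner (hN : IsMinkowskiNorm N) (hn : 1 ≤ n) (z : Euc n) :
    dualNorm N z = ⟪z, dualMaximizer N z⟫ := by
  refine IsGreatest.csSup_eq ⟨⟨_, hN.map_dualMaximizer hn z, rfl⟩, ?_⟩
  rintro _ ⟨η, hη, rfl⟩
  exact (hN.dualMaximizer_spec hn z).2 η hη

theorem inner_le_dualNorm_mul (hN : IsMinkowskiNorm N) (hn : 1 ≤ n) (z η : Euc n) :
    ⟪z, η⟫ ≤ dualNorm N z * N η := by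
  rcases eq_or_ne η 0 with rfl | hη
  · simp [hN.map_zero]
  have hNη := hN.pos hη
  have hunit : N ((N η)⁻¹ • η) = 1 := by
    rw [hN.map_smul, abs_of_pos (inv_pos.2 hNη), inv_mul_cancel₀ hNη.ne']
  have := (hN.dualMaximizer_spec hn z).2 _ hunit
  rw [real_inner_smul_right, ← hN.dualNorm_eq_inner hn, inv_mul_le_iff₀ hNη] at this
  linarith

theorem dualNorm_zero (hN : IsMinkowskiNorm N) (hn : 1 ≤ n) : dualNorm N 0 = 0 := by
  simp [hN.dualNorm_eq_inner hn]

theorem dualNorm_pos (hN : IsMinkowskiNorm N) (hn : 1 ≤ n) {z : Euc n} (hz : z ≠ 0) :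
    0 < dualNorm N z := by
  have h := hN.inner_le_dualNorm_mul hn z z
  rw [real_inner_self_eq_norm_sq] at h
  exact pos_of_mul_pos_left ((pow_pos (norm_pos_iff.2 hz) 2).trans_le h) (hN.pos hz).le

theorem dualNorm_nonneg (hN : IsMinkowskiNorm N) (hn : 1 ≤ n) (z : Euc n) :
    0 ≤ dualNorm N z := by
  rcases eq_or_ne z 0 with rfl | hz
  · rw [hN.dualNorm_zero hn]
  · exact (hN.dualNorm_pos hn hz).le

theorem exists_dualNorm_le (hN : IsMinkowskiNorm N) (hn : 1 ≤ n) :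
    ∃ C, 0 < C ∧ ∀ z : Euc n, dualNorm N z ≤ C * ‖z‖ := by
  obtain ⟨c, C, hc, hb⟩ := hN.exists_bounds hn
  refine ⟨c⁻¹, inv_pos.2 hc, fun z => ?_⟩
  have hξ : ‖dualMaximizer N z‖ ≤ c⁻¹ := by
    have := (hb (dualMaximizer N z)).1
    rw [hN.map_dualMaximizer hn] at this
    rw [← one_div, le_div_iff₀ hc]
    linarith
  rw [hN.dualNorm_eq_inner hn, mul_comm]
  exact (real_inner_le_norm _ _).trans (mul_le_mul_of_nonneg_left hξ (norm_nonneg z))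

theorem dualMaximizer_unique (hN : IsMinkowskiNorm N) (hn : 1 ≤ n) {z : Euc n} (hz : z ≠ 0)
    {η : Euc n} (hη : N η = 1) (hmax : ∀ η', N η' = 1 → ⟪z, η'⟫ ≤ ⟪z, η⟫) :
    η = dualMaximizer N z := by
  set ξ := dualMaximizer N z
  by_contra hne
  have hξ : N ξ = 1 := hN.map_dualMaximizer hn z
  have hηξ : ⟪z, η⟫ = ⟪z, ξ⟫ := le_antisymm ((hN.dualMaximizer_spec hn z).2 η hη) (hmax ξ hξ)
  set μ : Euc n := (1 / 2 : ℝ) • η + (1 / 2 : ℝ) • ξ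
  -- strict convexity puts the midpoint of two maximizers strictly inside the unit ball
  have hμsq : N μ ^ 2 < 1 := by
    have := hN.strictConvexOn_sq.2 (Set.mem_univ η) (Set.mem_univ ξ) hne one_half_pos one_half_pos
      (add_halves 1)
    simp only [smul_eq_mul, hη, hξ] at this
    linarith
  have hμ : N μ < 1 := by nlinarith [hN.nonneg μ]
  have hinner : ⟪z, μ⟫ = dualNorm N z := by
    simp only [μ, inner_add_right, real_inner_smul_right, hηξ]
    rw [hN.dualNorm_eq_inner hn]
    ring
  have := hN.inner_le_dualNorm_mul hn z μ
  rw [hinner] at this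
  nlinarith [hN.dualNorm_pos hn hz]

theorem continuousAt_dualMaximizer (hN : IsMinkowskiNorm N) (hn : 1 ≤ n) {z₀ : Euc n}
    (hz : z₀ ≠ 0) : ContinuousAt (dualMaximizer N) z₀ := by
  refine Filter.tendsto_iff_seq_tendsto.2 fun u hu => Filter.tendsto_of_subseq_tendsto
    fun ns hns => ?_
  obtain ⟨a, ha, φ, hφ, hlim⟩ := (hN.isCompact_unitSphere hn).tendsto_subseq
    fun j => hN.map_dualMaximizer hn (u (ns j))
  refine ⟨φ, ?_⟩
  have hu' : Filter.Tendsto (fun j => u (ns (φ j))) Filter.atTop (nhds z₀) :=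
    hu.comp (hns.comp hφ.tendsto_atTop)
  -- every cluster value of the maximizers maximizes `⟪z₀, ·⟫`, hence is the maximizer
  suffices a = dualMaximizer N z₀ from this ▸ hlim
  refine hN.dualMaximizer_unique hn hz ha fun η hη => le_of_tendsto_of_tendsto'
    (hu'.inner tendsto_const_nhds) (hu'.inner hlim) fun j => ?_
  exact (hN.dualMaximizer_spec hn _).2 η hη

theorem hasGradientAt_dualNorm (hN : IsMinkowskiNorm N) (hn : 1 ≤ n) {z₀ : Euc n}
    (hz : z₀ ≠ 0) : HasGradientAt (dualNorm N) (dualMaximizer N z₀) z₀ := by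
  have hξ : Filter.Tendsto (fun z => ‖dualMaximizer N z - dualMaximizer N z₀‖) (nhds z₀)
      (nhds 0) := by
    simpa using ((hN.continuousAt_dualMaximizer hn hz).sub_const (dualMaximizer N z₀)).norm
  refine hasGradientAt_iff_isLittleO.2 <| Asymptotics.isLittleO_iff.2 fun c hc => ?_
  filter_upwards [hξ.eventually_le_const hc] with z hzc
  -- `⟪·, ξ z₀⟫ ≤ N⁰` with equality at `z₀`, and likewise `⟪·, ξ z⟫` at `z`
  have hlow := hN.inner_le_dualNorm_mul hn z (dualMaximizer N z₀)
  have hup := hN.inner_le_dualNorm_mul hn z₀ (dualMaximizer N z)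
  have hcs := real_inner_le_norm (z - z₀) (dualMaximizer N z - dualMaximizer N z₀)
  rw [hN.map_dualMaximizer hn, mul_one] at hlow hup
  rw [hN.dualNorm_eq_inner hn z] at hlow ⊢
  rw [hN.dualNorm_eq_inner hn z₀] at hup ⊢
  simp only [inner_sub_left, inner_sub_right, real_inner_comm (dualMaximizer N z₀)]
    at hlow hup hcs ⊢
  rw [Real.norm_eq_abs, abs_of_nonneg (by linarith)]
  nlinarith [norm_nonneg (z - z₀)]

theorem continuous_dualNorm (hN : IsMinkowskiNorm N) (hn : 1 ≤ n) :
    Continuous (dualNorm N) := by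
  obtain ⟨C, -, hC⟩ := hN.exists_dualNorm_le hn
  refine continuous_iff_continuousAt.2 fun z => ?_
  rcases eq_or_ne z 0 with rfl | hz
  · have hlim : Filter.Tendsto (fun y : Euc n => C * ‖y‖) (nhds 0) (nhds 0) := by
      simpa using (continuous_norm.tendsto (0 : Euc n)).const_mul C
    rw [ContinuousAt, hN.dualNorm_zero hn]
    exact squeeze_zero (hN.dualNorm_nonneg hn) hC hlim
  · exact (hN.hasGradientAt_dualNorm hn hz).continuousAt

end IsMinkowskiNorm

/-- The duality map `J z = N⁰(z) ∇N⁰(z)`. -/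
def dualityMap {n : ℕ} (N : Euc n → ℝ) (z : Euc n) : Euc n :=
  dualNorm N z • dualMaximizer N z

namespace IsMinkowskiNorm

variable {n : ℕ} {N : Euc n → ℝ}

theorem gradient_eq_of_inner_le (hN : IsMinkowskiNorm N) {w η₀ : Euc n} (hη₀ : η₀ ≠ 0)
    (hle : ∀ η, ⟪w, η⟫ ≤ N η) (heq : ⟪w, η₀⟫ = N η₀) : gradient N η₀ = w := by
  have hmin : IsLocalMin (fun η => N η - ⟪w, η⟫) η₀ :=
    Filter.Eventually.of_forall fun η => by simp only [heq, sub_self, sub_nonneg, hle η]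
  have hzero := hmin.hasFDerivAt_eq_zero
    ((hN.differentiableAt hη₀).hasFDerivAt.sub (innerSL ℝ w).hasFDerivAt)
  rw [gradient, sub_eq_zero.1 hzero, LinearIsometryEquiv.symm_apply_eq]
  ext v
  simp

theorem smul_gradient_smul_dualMaximizer (hN : IsMinkowskiNorm N) (hn : 1 ≤ n) {z : Euc n}
    (hz : z ≠ 0) (t : ℝ) :
    N (t • dualMaximizer N z) • gradient N (t • dualMaximizer N z) = (t / dualNorm N z) • z := by
  rcases eq_or_ne t 0 with rfl | ht
  · simp [hN.map_zero]
  have hM := hN.dualNorm_pos hn hz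
  have hξ := hN.map_dualMaximizer hn z
  -- `⟪(sign t / N⁰ z) • z, ·⟫ ≤ N` by `inner_le_dualNorm_mul`, with equality at `t ξ`
  have hgrad : gradient N (t • dualMaximizer N z) = (t / |t| / dualNorm N z) • z := by
    refine hN.gradient_eq_of_inner_le (smul_ne_zero ht (fun h => by simp [h, hN.map_zero] at hξ))
      (fun η => ?_) ?_
    · have := hN.inner_le_dualNorm_mul hn z ((t / |t|) • η)
      rw [hN.map_smul, abs_div, abs_abs, div_self (abs_ne_zero.2 ht), one_mul,
        real_inner_smul_right] at this
      rw [real_inner_smul_left, div_mul_eq_mul_div, div_le_iff₀ hM]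
      linarith
    · rw [real_inner_smul_left, real_inner_smul_right, ← hN.dualNorm_eq_inner hn, hN.map_smul,
        hξ]
      field_simp
      exact (sq_abs t).symm
  rw [hgrad, hN.map_smul, hξ, smul_smul]
  congr 1
  field_simp

theorem map_dualityMap (hN : IsMinkowskiNorm N) (hn : 1 ≤ n) (z : Euc n) :
    N (dualityMap N z) = dualNorm N z := by
  rw [dualityMap, hN.map_smul, abs_of_nonneg (hN.dualNorm_nonneg hn z),
    hN.map_dualMaximizer hn, mul_one]

theorem inner_dualityMap_self (hN : IsMinkowskiNorm N) (hn : 1 ≤ n) (z : Euc n) :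
    ⟪dualityMap N z, z⟫ = dualNorm N z ^ 2 := by
  rw [dualityMap, real_inner_smul_left, real_inner_comm, ← hN.dualNorm_eq_inner hn, sq]

theorem smul_gradient_smul_dualityMap (hN : IsMinkowskiNorm N) (hn : 1 ≤ n) (l : ℝ)
    (z : Euc n) : N (l • dualityMap N z) • gradient N (l • dualityMap N z) = l • z := by
  rcases eq_or_ne z 0 with rfl | hz
  · simp [dualityMap, hN.dualNorm_zero hn, hN.map_zero]
  rw [dualityMap, smul_smul, hN.smul_gradient_smul_dualMaximizer hn hz,
    mul_div_cancel_right₀ _ (hN.dualNorm_pos hn hz).ne']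

theorem hasGradientAt_rpow_dualNorm_of_ne_zero (hN : IsMinkowskiNorm N) (hn : 1 ≤ n)
    {z : Euc n} (hz : z ≠ 0) (r : ℝ) :
    HasGradientAt (fun y => dualNorm N y ^ r)
      ((r * dualNorm N z ^ (r - 2)) • dualityMap N z) z := by
  have hM := hN.dualNorm_pos hn hz
  have h := (Real.hasDerivAt_rpow_const (p := r) (Or.inl hM.ne')).comp_hasGradientAt
    (hN.hasGradientAt_dualNorm hn hz)
  rwa [dualityMap, smul_smul, mul_assoc, ← Real.rpow_add_one hM.ne', show r - 2 + 1 = r - 1 by ring]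

theorem hasGradientAt_rpow_dualNorm (hN : IsMinkowskiNorm N) (hn : 1 ≤ n) {r : ℝ} (hr : 1 < r)
    (z : Euc n) :
    HasGradientAt (fun y => dualNorm N y ^ r)
      ((r * dualNorm N z ^ (r - 2)) • dualityMap N z) z := by
  rcases eq_or_ne z 0 with rfl | hz
  · obtain ⟨C, hC, hle⟩ := hN.exists_dualNorm_le hn
    rw [dualityMap, hN.dualNorm_zero hn, zero_smul, smul_zero]
    refine hasGradientAt_zero_of_abs_le_mul_rpow hr (C := C ^ r) fun y => ?_
    rw [abs_of_nonneg (Real.rpow_nonneg (hN.dualNorm_nonneg hn y) r),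
      ← Real.mul_rpow hC.le (norm_nonneg y)]
    exact Real.rpow_le_rpow (hN.dualNorm_nonneg hn y) (hle y) (by linarith)
  · exact hN.hasGradientAt_rpow_dualNorm_of_ne_zero hn hz r

theorem hasGradientAt_dualNorm_sq (hN : IsMinkowskiNorm N) (hn : 1 ≤ n) (z : Euc n) :
    HasGradientAt (fun y => dualNorm N y ^ 2) ((2 : ℝ) • dualityMap N z) z := by
  have h := hN.hasGradientAt_rpow_dualNorm hn one_lt_two z
  simp only [Real.rpow_two, sub_self, Real.rpow_zero, mul_one] at h
  exact h

end IsMinkowskiNorm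

section PartialDivergence

variable {x : Euc m × Euc k}

theorem divZ_eq_euclideanDiv (V : Euc m × Euc k → Euc m) (x : Euc m × Euc k) :
    divZ V x = euclideanDiv (fun z => V (z, x.2)) x.1 := rfl

theorem divS_eq_euclideanDiv (V : Euc m × Euc k → Euc k) (x : Euc m × Euc k) :
    divS V x = euclideanDiv (fun σ => V (x.1, σ)) x.2 := rfl

theorem divZ_congr {V W : Euc m × Euc k → Euc m} (h : V =ᶠ[nhds x] W) :
    divZ V x = divZ W x :=
  euclideanDiv_congr (h.comp_tendsto ((Continuous.prodMk_left x.2).tendsto' x.1 x rfl))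

theorem divS_congr {V W : Euc m × Euc k → Euc k} (h : V =ᶠ[nhds x] W) :
    divS V x = divS W x :=
  euclideanDiv_congr (h.comp_tendsto ((Continuous.prodMk_right x.1).tendsto' x.2 x rfl))

end PartialDivergence

def rhoPow (α : ℝ) (Φ : Euc m → ℝ) (Ψ : Euc k → ℝ) (x : Euc m × Euc k) : ℝ :=
  dualNorm Φ x.1 ^ (2 * (α + 1)) + 4 * (α + 1) ^ 2 * dualNorm Ψ x.2 ^ 2

section Gauge

variable {α : ℝ} {Φ : Euc m → ℝ} {Ψ : Euc k → ℝ}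

theorem rhoPow_nonneg (hΦ : IsMinkowskiNorm Φ) (hm : 1 ≤ m) (x : Euc m × Euc k) :
    0 ≤ rhoPow α Φ Ψ x :=
  add_nonneg (Real.rpow_nonneg (hΦ.dualNorm_nonneg hm _) _) (by positivity)

theorem rhoPow_pos (hΦ : IsMinkowskiNorm Φ) (hΨ : IsMinkowskiNorm Ψ) (hm : 1 ≤ m) (hk : 1 ≤ k)
    (hα : 0 < α) {x : Euc m × Euc k} (hx : x ≠ 0) : 0 < rhoPow α Φ Ψ x := by
  rcases eq_or_ne x.1 0 with hx1 | hx1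
  · have hx2 : x.2 ≠ 0 := fun hx2 => hx (Prod.ext hx1 hx2)
    have := hΨ.dualNorm_pos hk hx2
    exact add_pos_of_nonneg_of_pos (Real.rpow_nonneg (hΦ.dualNorm_nonneg hm _) _) (by positivity)
  · exact add_pos_of_pos_of_nonneg (Real.rpow_pos_of_pos (hΦ.dualNorm_pos hm hx1) _)
      (by positivity)

theorem rho_rpow (hΦ : IsMinkowskiNorm Φ) (hm : 1 ≤ m) (e : ℝ) (x : Euc m × Euc k) :
    rho α Φ Ψ x ^ e = rhoPow α Φ Ψ x ^ (e / (2 * (α + 1))) := by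
  change (rhoPow α Φ Ψ x ^ (1 / (2 * (α + 1)))) ^ e = _
  rw [← Real.rpow_mul (rhoPow_nonneg hΦ hm x), one_div_mul_eq_div]

theorem hasGradientAt_rhoPow_fst (hΦ : IsMinkowskiNorm Φ) (hm : 1 ≤ m) (hα : 0 < α)
    (x : Euc m × Euc k) :
    HasGradientAt (fun z => rhoPow α Φ Ψ (z, x.2))
      ((2 * (α + 1) * dualNorm Φ x.1 ^ (2 * α)) • dualityMap Φ x.1) x.1 := by
  have h := (hΦ.hasGradientAt_rpow_dualNorm hm (by linarith : 1 < 2 * (α + 1)) x.1).add_const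
    (4 * (α + 1) ^ 2 * dualNorm Ψ x.2 ^ 2)
  rwa [show 2 * (α + 1) - 2 = 2 * α by ring] at h

theorem hasGradientAt_rhoPow_snd (hΨ : IsMinkowskiNorm Ψ) (hk : 1 ≤ k) (x : Euc m × Euc k) :
    HasGradientAt (fun σ => rhoPow α Φ Ψ (x.1, σ)) ((8 * (α + 1) ^ 2) • dualityMap Ψ x.2) x.2 := by
  have h := ((hΨ.hasGradientAt_dualNorm_sq hk x.2).const_mul (4 * (α + 1) ^ 2)).const_add
    (dualNorm Φ x.1 ^ (2 * (α + 1)))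
  rwa [smul_smul, show 4 * (α + 1) ^ 2 * 2 = 8 * (α + 1) ^ 2 by ring] at h

/-- Euler's identity for `ρ^{2(α+1)}`, which is homogeneous of degree `2(α+1)` under the
dilations `(z, σ) ↦ (λ z, λ^{α+1} σ)`. -/
theorem inner_gradient_rhoPow (hΦ : IsMinkowskiNorm Φ) (hΨ : IsMinkowskiNorm Ψ) (hm : 1 ≤ m)
    (hk : 1 ≤ k) (hα : 0 < α) (x : Euc m × Euc k) :
    ⟪(2 * (α + 1) * dualNorm Φ x.1 ^ (2 * α)) • dualityMap Φ x.1, x.1⟫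
      + (α + 1) * ⟪(8 * (α + 1) ^ 2) • dualityMap Ψ x.2, x.2⟫
      = 2 * (α + 1) * rhoPow α Φ Ψ x := by
  have hA : dualNorm Φ x.1 ^ (2 * α) * dualNorm Φ x.1 ^ 2 = dualNorm Φ x.1 ^ (2 * (α + 1)) := by
    rw [← Real.rpow_add_natCast' (hΦ.dualNorm_nonneg hm _) (by push_cast; linarith)]
    push_cast
    ring_nf
  rw [real_inner_smul_left, real_inner_smul_left, hΦ.inner_dualityMap_self hm,
    hΨ.inner_dualityMap_self hk, rhoPow, ← hA]
  ring

end Gauge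

theorem grushin_bracket_eq {α β e a b t : ℝ} (hα : 0 < α) (ha : 0 ≤ a) (ht : 0 < t)
    (hT : t = a ^ (2 * (α + 1)) + 4 * (α + 1) ^ 2 * b ^ 2) :
    (e * t ^ (β - 1) * a ^ (2 * α)) ^ 2 * a ^ 2
        + a ^ (2 * α) / 4 * ((4 * (α + 1) * e * t ^ (β - 1)) ^ 2 * b ^ 2)
      = e ^ 2 * t ^ (2 * β - 1) * a ^ (2 * α) := by
  have ht2 : (t ^ (β - 1)) ^ 2 * t = t ^ (2 * β - 1) := by
    rw [← Real.rpow_natCast, ← Real.rpow_mul ht.le, ← Real.rpow_add_one ht.ne']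
    ring_nf
  have ha2 : a ^ (2 * α) * a ^ 2 = a ^ (2 * (α + 1)) := by
    rw [← Real.rpow_add_natCast' ha (by push_cast; linarith)]
    push_cast
    ring_nf
  rw [← ht2, hT, ← ha2]
  ring

theorem grushin_rpow_bracket_mul {α p e β a t : ℝ} (hα : 0 < α) (hp : 1 < p) (ha : 0 ≤ a)
    (ht : 0 < t) :
    (e ^ 2 * t ^ (2 * β - 1) * a ^ (2 * α)) ^ ((p - 2) / 2) * (e * t ^ (β - 1) * a ^ (2 * α))
      = e * |e| ^ (p - 2) * a ^ (α * p) * t ^ ((p - 1) * β - p / 2) := by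
  have ht' : t ^ ((2 * β - 1) * ((p - 2) / 2)) * t ^ (β - 1) = t ^ ((p - 1) * β - p / 2) := by
    rw [← Real.rpow_add ht]
    ring_nf
  have ha' : a ^ (2 * α * ((p - 2) / 2)) * a ^ (2 * α) = a ^ (α * p) := by
    rw [← Real.rpow_add' ha (by nlinarith)]
    ring_nf
  rw [Real.mul_rpow (by positivity) (Real.rpow_nonneg ha _),
    Real.mul_rpow (sq_nonneg e) (Real.rpow_nonneg ht.le _), ← sq_abs e, ← Real.rpow_natCast,
    ← Real.rpow_mul (abs_nonneg e), ← Real.rpow_mul ht.le, ← Real.rpow_mul ha, ← ht', ← ha']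
  push_cast
  ring_nf

def fluxDensity (α c s δ : ℝ) (Φ : Euc m → ℝ) (Ψ : Euc k → ℝ) (y : Euc m × Euc k) : ℝ :=
  c * dualNorm Φ y.1 ^ s * rhoPow α Φ Ψ y ^ δ

section Flux

variable {α p : ℝ} {Φ : Euc m → ℝ} {Ψ : Euc k → ℝ}

theorem gradZ_rho_rpow (hΦ : IsMinkowskiNorm Φ) (hΨ : IsMinkowskiNorm Ψ) (hm : 1 ≤ m)
    (hk : 1 ≤ k) (hα : 0 < α) (e : ℝ) {x : Euc m × Euc k} (hx : x ≠ 0) :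
    gradZ (fun y => rho α Φ Ψ y ^ e) x
      = (e * rhoPow α Φ Ψ x ^ (e / (2 * (α + 1)) - 1) * dualNorm Φ x.1 ^ (2 * α))
          • dualityMap Φ x.1 := by
  have h : HasGradientAt (fun z => rhoPow α Φ Ψ (z, x.2) ^ (e / (2 * (α + 1)))) _ x.1 :=
    HasDerivAt.comp_hasGradientAt (f := fun z => rhoPow α Φ Ψ (z, x.2))
      (Real.hasDerivAt_rpow_const (Or.inl (rhoPow_pos hΦ hΨ hm hk hα hx).ne'))
      (hasGradientAt_rhoPow_fst hΦ hm hα x)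
  simp only [gradZ, rho_rpow hΦ hm, h.gradient, smul_smul]
  congr 1
  field_simp

theorem gradS_rho_rpow (hΦ : IsMinkowskiNorm Φ) (hΨ : IsMinkowskiNorm Ψ) (hm : 1 ≤ m)
    (hk : 1 ≤ k) (hα : 0 < α) (e : ℝ) {x : Euc m × Euc k} (hx : x ≠ 0) :
    gradS (fun y => rho α Φ Ψ y ^ e) x
      = (4 * (α + 1) * e * rhoPow α Φ Ψ x ^ (e / (2 * (α + 1)) - 1)) • dualityMap Ψ x.2 := by
  have h : HasGradientAt (fun σ => rhoPow α Φ Ψ (x.1, σ) ^ (e / (2 * (α + 1)))) _ x.2 :=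
    HasDerivAt.comp_hasGradientAt (f := fun σ => rhoPow α Φ Ψ (x.1, σ))
      (Real.hasDerivAt_rpow_const (Or.inl (rhoPow_pos hΦ hΨ hm hk hα hx).ne'))
      (hasGradientAt_rhoPow_snd hΨ hk x)
  simp only [gradS, rho_rpow hΦ hm, h.gradient, smul_smul]
  congr 1
  field_simp
  ring

theorem bracket_rho_rpow (hΦ : IsMinkowskiNorm Φ) (hΨ : IsMinkowskiNorm Ψ) (hm : 1 ≤ m)
    (hk : 1 ≤ k) (hα : 0 < α) (e : ℝ) {y : Euc m × Euc k} (hy : y ≠ 0) :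
    Φ (gradZ (fun y => rho α Φ Ψ y ^ e) y) ^ 2
        + dualNorm Φ y.1 ^ (2 * α) / 4 * Ψ (gradS (fun y => rho α Φ Ψ y ^ e) y) ^ 2
      = e ^ 2 * rhoPow α Φ Ψ y ^ (2 * (e / (2 * (α + 1))) - 1) * dualNorm Φ y.1 ^ (2 * α) := by
  rw [gradZ_rho_rpow hΦ hΨ hm hk hα e hy, gradS_rho_rpow hΦ hΨ hm hk hα e hy, hΦ.map_smul,
    hΨ.map_smul, hΦ.map_dualityMap hm, hΨ.map_dualityMap hk, mul_pow, mul_pow, sq_abs, sq_abs]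
  exact grushin_bracket_eq hα (hΦ.dualNorm_nonneg hm _) (rhoPow_pos hΦ hΨ hm hk hα hy) rfl

theorem fluxZ_rho_rpow (hΦ : IsMinkowskiNorm Φ) (hΨ : IsMinkowskiNorm Ψ) (hm : 1 ≤ m)
    (hk : 1 ≤ k) (hα : 0 < α) (hp : 1 < p) (e : ℝ) {y : Euc m × Euc k} (hy : y ≠ 0) :
    (Φ (gradZ (fun y => rho α Φ Ψ y ^ e) y) ^ 2
        + dualNorm Φ y.1 ^ (2 * α) / 4 * Ψ (gradS (fun y => rho α Φ Ψ y ^ e) y) ^ 2)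
          ^ ((p - 2) / 2) •
      (Φ (gradZ (fun y => rho α Φ Ψ y ^ e) y) • gradient Φ (gradZ (fun y => rho α Φ Ψ y ^ e) y))
      = fluxDensity α (e * |e| ^ (p - 2)) (α * p) ((p - 1) * (e / (2 * (α + 1))) - p / 2) Φ Ψ y
          • y.1 := by
  rw [bracket_rho_rpow hΦ hΨ hm hk hα e hy, gradZ_rho_rpow hΦ hΨ hm hk hα e hy,
    hΦ.smul_gradient_smul_dualityMap hm, smul_smul, fluxDensity,
    grushin_rpow_bracket_mul hα hp (hΦ.dualNorm_nonneg hm _) (rhoPow_pos hΦ hΨ hm hk hα hy)]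

theorem fluxS_rho_rpow (hΦ : IsMinkowskiNorm Φ) (hΨ : IsMinkowskiNorm Ψ) (hm : 1 ≤ m)
    (hk : 1 ≤ k) (hα : 0 < α) (hp : 1 < p) (e : ℝ) {y : Euc m × Euc k} (hy : y ≠ 0) :
    (Φ (gradZ (fun y => rho α Φ Ψ y ^ e) y) ^ 2
        + dualNorm Φ y.1 ^ (2 * α) / 4 * Ψ (gradS (fun y => rho α Φ Ψ y ^ e) y) ^ 2)
          ^ ((p - 2) / 2) •
      ((dualNorm Φ y.1 ^ (2 * α) / 4 * Ψ (gradS (fun y => rho α Φ Ψ y ^ e) y))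
        • gradient Ψ (gradS (fun y => rho α Φ Ψ y ^ e) y))
      = ((α + 1) * fluxDensity α (e * |e| ^ (p - 2)) (α * p)
          ((p - 1) * (e / (2 * (α + 1))) - p / 2) Φ Ψ y) • y.2 := by
  rw [bracket_rho_rpow hΦ hΨ hm hk hα e hy, gradS_rho_rpow hΦ hΨ hm hk hα e hy, mul_smul,
    hΨ.smul_gradient_smul_dualityMap hk, smul_smul, smul_smul, fluxDensity,
    ← grushin_rpow_bracket_mul hα hp (hΦ.dualNorm_nonneg hm _) (rhoPow_pos hΦ hΨ hm hk hα hy)]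
  ring_nf

theorem Lop_rho_rpow (hΦ : IsMinkowskiNorm Φ) (hΨ : IsMinkowskiNorm Ψ) (hm : 1 ≤ m)
    (hk : 1 ≤ k) (hα : 0 < α) (hp : 1 < p) (e : ℝ) {x : Euc m × Euc k} (hx : x ≠ 0) :
    Lop α p Φ Ψ (fun y => rho α Φ Ψ y ^ e) x
      = divZ (fun y => fluxDensity α (e * |e| ^ (p - 2)) (α * p)
            ((p - 1) * (e / (2 * (α + 1))) - p / 2) Φ Ψ y • y.1) x
        + divS (fun y => ((α + 1) * fluxDensity α (e * |e| ^ (p - 2)) (α * p)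
            ((p - 1) * (e / (2 * (α + 1))) - p / 2) Φ Ψ y) • y.2) x := by
  have hnhds : ∀ᶠ y in nhds x, y ≠ 0 := isOpen_compl_singleton.mem_nhds hx
  exact congrArg₂ (· + ·)
    (divZ_congr (hnhds.mono fun y hy => fluxZ_rho_rpow hΦ hΨ hm hk hα hp e hy))
    (divS_congr (hnhds.mono fun y hy => fluxS_rho_rpow hΦ hΨ hm hk hα hp e hy))

end Flux

section FluxDivergence

variable {α c s δ : ℝ} {Φ : Euc m → ℝ} {Ψ : Euc k → ℝ}

theorem fluxDensity_of_fst_eq_zero (hΦ : IsMinkowskiNorm Φ) (hm : 1 ≤ m) (hs : s ≠ 0)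
    {y : Euc m × Euc k} (hy : y.1 = 0) : fluxDensity α c s δ Φ Ψ y = 0 := by
  simp [fluxDensity, hy, hΦ.dualNorm_zero hm, Real.zero_rpow hs]

theorem tendsto_fluxDensity_zero (hΦ : IsMinkowskiNorm Φ) (hΨ : IsMinkowskiNorm Ψ) (hm : 1 ≤ m)
    (hk : 1 ≤ k) (hα : 0 < α) (hs : 0 < s) {σ : Euc k} (hσ : σ ≠ 0) :
    Filter.Tendsto (fun z => fluxDensity α c s δ Φ Ψ (z, σ)) (nhds 0) (nhds 0) := by
  have hA := hΦ.continuous_dualNorm hm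
  have hT : ContinuousAt (fun z => rhoPow α Φ Ψ (z, σ)) 0 :=
    ((hA.rpow_const fun _ => Or.inr (by linarith)).add continuous_const).continuousAt
  have hpos : rhoPow α Φ Ψ ((0 : Euc m), σ) ≠ 0 :=
    (rhoPow_pos hΦ hΨ hm hk hα fun h => hσ (congrArg Prod.snd h)).ne'
  have h : ContinuousAt (fun z => fluxDensity α c s δ Φ Ψ (z, σ)) 0 :=
    (continuousAt_const.mul (hA.continuousAt.rpow_const (Or.inr hs.le))).mul
      (hT.rpow_const (Or.inl hpos))
  simpa [fluxDensity, hΦ.dualNorm_zero hm, Real.zero_rpow hs.ne'] using h.tendsto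

theorem divZ_add_divS_fluxDensity_of_fst_ne_zero (hΦ : IsMinkowskiNorm Φ)
    (hΨ : IsMinkowskiNorm Ψ) (hm : 1 ≤ m) (hk : 1 ≤ k) (hα : 0 < α) (hs : s ≠ 0)
    {x : Euc m × Euc k} (hx1 : x.1 ≠ 0) :
    divZ (fun y => fluxDensity α c s δ Φ Ψ y • y.1) x
      + divS (fun y => ((α + 1) * fluxDensity α c s δ Φ Ψ y) • y.2) x
      = (m + (α + 1) * k + s + 2 * (α + 1) * δ) * fluxDensity α c s δ Φ Ψ x := by
  have hx : x ≠ 0 := fun h => hx1 (by rw [h]; rfl)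
  have hT := rhoPow_pos hΦ hΨ hm hk hα hx
  have hz : HasGradientAt (fun z => fluxDensity α c s δ Φ Ψ (z, x.2)) _ x.1 :=
    ((hΦ.hasGradientAt_rpow_dualNorm_of_ne_zero hm hx1 s).const_mul c).mul
      (HasDerivAt.comp_hasGradientAt (f := fun z => rhoPow α Φ Ψ (z, x.2))
        (Real.hasDerivAt_rpow_const (Or.inl hT.ne')) (hasGradientAt_rhoPow_fst hΦ hm hα x))
  have hσ : HasGradientAt (fun σ => (α + 1) * fluxDensity α c s δ Φ Ψ (x.1, σ)) _ x.2 :=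
    ((HasDerivAt.comp_hasGradientAt (f := fun σ => rhoPow α Φ Ψ (x.1, σ))
        (Real.hasDerivAt_rpow_const (Or.inl hT.ne')) (hasGradientAt_rhoPow_snd hΨ hk x)).const_mul
      (c * dualNorm Φ x.1 ^ s)).const_mul (α + 1)
  have hEuler := inner_gradient_rhoPow hΦ hΨ hm hk hα x
  have hA : dualNorm Φ x.1 ^ (s - 2) * dualNorm Φ x.1 ^ 2 = dualNorm Φ x.1 ^ s := by
    rw [← Real.rpow_add_natCast' (hΦ.dualNorm_nonneg hm _) (by simpa using hs)]
    push_cast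
    ring_nf
  have hT1 : rhoPow α Φ Ψ x ^ (δ - 1) * rhoPow α Φ Ψ x = rhoPow α Φ Ψ x ^ δ := by
    rw [← Real.rpow_add_one hT.ne', sub_add_cancel]
  rw [divZ_eq_euclideanDiv, divS_eq_euclideanDiv, euclideanDiv_smul_self hz,
    euclideanDiv_smul_self hσ]
  simp only [inner_add_left, real_inner_smul_left, hΦ.inner_dualityMap_self hm,
    hΨ.inner_dualityMap_self hk, fluxDensity] at hEuler ⊢
  linear_combination (c * dualNorm Φ x.1 ^ s * δ * rhoPow α Φ Ψ x ^ (δ - 1)) * hEuler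
    + (2 * (α + 1) * δ * c * dualNorm Φ x.1 ^ s) * hT1
    + (c * s * rhoPow α Φ Ψ x ^ δ) * hA

/-- `W = fluxDensity α c s δ Φ Ψ` is homogeneous of degree `s + 2(α+1)δ` under the flow
`(z, σ) ↦ (λ z, λ^{α+1} σ)` of the field `(z, (α+1) σ)`, whose divergence is `Q`. -/
theorem divZ_add_divS_fluxDensity (hΦ : IsMinkowskiNorm Φ) (hΨ : IsMinkowskiNorm Ψ)
    (hm : 1 ≤ m) (hk : 1 ≤ k) (hα : 0 < α) (hs : 0 < s) {x : Euc m × Euc k} (hx : x ≠ 0) :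
    divZ (fun y => fluxDensity α c s δ Φ Ψ y • y.1) x
      + divS (fun y => ((α + 1) * fluxDensity α c s δ Φ Ψ y) • y.2) x
      = (m + (α + 1) * k + s + 2 * (α + 1) * δ) * fluxDensity α c s δ Φ Ψ x := by
  rcases eq_or_ne x.1 0 with hx1 | hx1
  swap
  · exact divZ_add_divS_fluxDensity_of_fst_ne_zero hΦ hΨ hm hk hα hs.ne' hx1
  obtain ⟨z, σ⟩ := x
  obtain rfl : z = 0 := hx1
  have hσ : σ ≠ 0 := fun h => hx (by rw [h]; rfl)
  -- on `z = 0` the density vanishes identically in `σ` and like `Φ⁰(z)^s` in `z`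
  have hslice : HasGradientAt (fun σ' => (α + 1) * fluxDensity α c s δ Φ Ψ (0, σ')) 0 σ := by
    simpa [fluxDensity_of_fst_eq_zero hΦ hm hs.ne'] using hasGradientAt_const σ (0 : ℝ)
  rw [divZ_eq_euclideanDiv, divS_eq_euclideanDiv,
    euclideanDiv_smul_self_of_tendsto (tendsto_fluxDensity_zero hΦ hΨ hm hk hα hs hσ),
    euclideanDiv_smul_self hslice, fluxDensity_of_fst_eq_zero hΦ hm hs.ne' rfl]
  simp

end FluxDivergence

theorem Lop_of_power_of_rho_general (m k : ℕ) (hm : 1 ≤ m) (hk : 1 ≤ k)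
    (α : ℝ) (hα : 0 < α) (p : ℝ) (hp : 1 < p)
    (Φ : Euc m → ℝ) (Ψ : Euc k → ℝ) (hΦ : IsMinkowskiNorm Φ) (hΨ : IsMinkowskiNorm Ψ)
    (Q : ℝ) (hQ : Q = (m : ℝ) + (α + 1) * (k : ℝ)) :
    ∀ x : Euc m × Euc k, x ≠ 0 →
      Lop α p Φ Ψ (fun y => rho α Φ Ψ y ^ (-((Q - p) / (p - 1)))) x = 0 := by
  intro x hx
  -- with `e = -(Q - p)/(p - 1)` the homogeneity degree of the flux is exactly `-Q`
  have hdegree : (m : ℝ) + (α + 1) * k + α * p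
      + 2 * (α + 1) * ((p - 1) * (-((Q - p) / (p - 1)) / (2 * (α + 1))) - p / 2) = 0 := by
    have : p - 1 ≠ 0 := by linarith
    field_simp
    rw [hQ]
    ring
  rw [Lop_rho_rpow hΦ hΨ hm hk hα hp _ hx,
    divZ_add_divS_fluxDensity hΦ hΨ hm hk hα (by positivity) hx, hdegree, zero_mul]

/-- For `p ≠ Q`, the function `u = ρ^{−(Q−p)/(p−1)}` satisfies `𝓛_{α,p}(u) = 0` on
`ℝ^N ∖ {0}`. -/
theorem Lop_of_power_of_rho (m k : ℕ) (hm : 1 ≤ m) (hk : 1 ≤ k)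
    (α : ℝ) (hα : 0 < α) (p : ℝ) (hp : 1 < p)
    (Φ : Euc m → ℝ) (Ψ : Euc k → ℝ) (hΦ : IsMinkowskiNorm Φ) (hΨ : IsMinkowskiNorm Ψ)
    (Q : ℝ) (hQ : Q = (m : ℝ) + (α + 1) * (k : ℝ)) (hpQ : p ≠ Q) :
    ∀ x : Euc m × Euc k, x ≠ 0 →
      Lop α p Φ Ψ (fun y => rho α Φ Ψ y ^ (-((Q - p) / (p - 1)))) x = 0 :=
  Lop_of_power_of_rho_general m k hm hk α hα p hp Φ Ψ hΦ hΨ Q hQ
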